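/- arXiv:1307.3531 — 3 statements merged into one kernel-verified Lean document; each statement's English description precedes it below -/
import Mathlib

section
/- Let (U,Q) be a nondegenerate quadratic space over a field k of characteristic not 2, and let T : U → U be a self-adjoint operator whose characteristic polynomial is separable (has no repeated roots). Then no eigenvector of T (over any field extension) is isotropic; in particular, over an algebraically closed extension, every eigenvalue λ of T has an eigenvector v with ⟨v,v⟩ ≠ 0. -/
/-!
Let `v` be an eigenvector of `T` for `a`. Since `a` is a simple root of the characteristic
polynomial, the generalized eigenspace of `a` is the line `k ∙ v`, and the Fitting decomposition of
`T - a` gives `U = k ∙ v + range (T - a)`. Self-adjointness makes `v` orthogonal to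
`range (T - a)`, so if `⟨v, v⟩ = 0` then `v` is orthogonal to all of `U`, contradicting
nondegeneracy.
-/

open Module

namespace Module.End

lemma maxGenEigenspace_sup_range_sub_smul_eq_top {R M : Type*} [CommRing R] [AddCommGroup M]
    [Module R M] [IsArtinian R M] [IsNoetherian R M] (T : End R M) (a : R) :
    T.maxGenEigenspace a ⊔ LinearMap.range (T - a • 1) = ⊤ := by
  have h := (LinearMap.isCompl_iSup_ker_pow_iInf_range_pow (T - a • 1)).sup_eq_top
  simp only [← iSup_genEigenspace_eq, genEigenspace_nat] at h ⊢
  exact eq_top_iff.2 (h ▸ sup_le_sup_left ((iInf_le _ 1).trans_eq (by rw [pow_one])) _)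

lemma maxGenEigenspace_eq_span_of_rootMultiplicity_le_one {K V : Type*} [Field K]
    [AddCommGroup V] [Module K V] [FiniteDimensional K V] {T : End K V} {a : K} {v : V}
    (hv0 : v ≠ 0) (hv : T v = a • v) (h : T.charpoly.rootMultiplicity a ≤ 1) :
    T.maxGenEigenspace a = K ∙ v := by
  have hmem : v ∈ T.maxGenEigenspace a :=
    eigenspace_le_maxGenEigenspace (mem_eigenspace_iff.2 hv)
  have hpos : finrank K (T.maxGenEigenspace a) ≠ 0 := by
    rw [Ne, Submodule.finrank_eq_zero]
    exact (Submodule.ne_bot_iff _).2 ⟨v, hmem, hv0⟩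
  refine eq_span_singleton_of_mem_of_finrank_eq_one ?_ hmem hv0
  rw [LinearMap.finrank_maxGenEigenspace_eq] at hpos ⊢
  lia

end Module.End

lemma LinearMap.IsAdjointPair.range_sub_smul_le_ker {R M : Type*} [CommRing R] [AddCommGroup M]
    [Module R M] {B : LinearMap.BilinForm R M} {T : End R M} (hT : B.IsAdjointPair B T T)
    {a : R} {v : M} (hv : T v = a • v) :
    LinearMap.range (T - a • 1) ≤ LinearMap.ker (B v) := by
  rintro _ ⟨w, rfl⟩
  simp [← hT v w, hv, smul_eq_mul]

theorem stmt1_general {k U : Type*} [Field k] [AddCommGroup U] [Module k U]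
    [FiniteDimensional k U]
    (B : LinearMap.BilinForm k U)
    (hnd : LinearMap.BilinForm.Nondegenerate B)
    (T : Module.End k U) (hsa : ∀ v w : U, B (T v) w = B v (T w))
    (hsep : (LinearMap.charpoly T).Separable)
    (v : U) (hv0 : v ≠ 0) (a : k) (hv : T v = a • v) :
    B v v ≠ 0 := by
  intro hvv
  have hline : T.maxGenEigenspace a ≤ LinearMap.ker (B v) := by
    rw [End.maxGenEigenspace_eq_span_of_rootMultiplicity_le_one hv0 hv
      (Polynomial.rootMultiplicity_le_one_of_separable hsep a), Submodule.span_singleton_le_iff_mem]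
    exact hvv
  have htop : ⊤ ≤ LinearMap.ker (B v) := by
    rw [← End.maxGenEigenspace_sup_range_sub_smul_eq_top T a]
    exact sup_le hline (LinearMap.IsAdjointPair.range_sub_smul_le_ker hsa hv)
  exact hv0 (hnd.1 v fun w => htop Submodule.mem_top)

/-- A self-adjoint operator with separable characteristic polynomial on a
nondegenerate quadratic space has no isotropic eigenvector: every eigenvector
`v` (for an eigenvalue `a`) satisfies `⟨v,v⟩ ≠ 0`. -/
theorem stmt1 {k U : Type*} [Field k] [AddCommGroup U] [Module k U]
    [FiniteDimensional k U] (hchar : (2 : k) ≠ 0)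
    (B : LinearMap.BilinForm k U) (hsymm : LinearMap.BilinForm.IsSymm B)
    (hnd : LinearMap.BilinForm.Nondegenerate B)
    (T : Module.End k U) (hsa : ∀ v w : U, B (T v) w = B v (T w))
    (hsep : (LinearMap.charpoly T).Separable)
    (v : U) (hv0 : v ≠ 0) (a : k) (hv : T v = a • v) :
    B v v ≠ 0 :=
  stmt1_general B hnd T hsa hsep v hv0 a hv
end

section
/- Let (U,Q) be a nondegenerate quadratic space over a field k of characteristic not 2, and let T be a self-adjoint operator on U with separable characteristic polynomial. Then no nonzero isotropic subspace of U is T-stable: if W ⊆ U is a T-invariant subspace on which the bilinear form vanishes identically, then W = 0. -/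
/-!
Since the characteristic polynomial of `T` is squarefree, `T` is semisimple, so `W` has a
`T`-stable complement `W'`. The characteristic polynomials `p` of `T|W` and `q` of `T|W'` multiply
to that of `T`, hence are coprime; `p(T)` kills `W` and `q(T)` maps everything into `W`. Writing
`1 = a p + b q`, every `x` splits as `p(T) a(T) x + q(T) b(T) x`. For `w ∈ W` the first summand is
orthogonal to `w` because `p(T)` is self-adjoint and `p(T) w = 0`, the second because `W` is
isotropic. So `W` lies in the radical of the form, which is zero.
-/

open Polynomial Module

namespace LinearMap

section Adjoint

variable {R M N : Type*} [CommRing R] [AddCommGroup M] [Module R M] [AddCommGroup N] [Module R N]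
  {B : M →ₗ[R] M →ₗ[R] N} {T : Module.End R M}

lemma IsSelfAdjoint.aeval (hT : B.IsSelfAdjoint T) (p : R[X]) :
    B.IsSelfAdjoint (aeval T p) := by
  induction p using Polynomial.induction_on with
  | C a => intro x y; simp
  | add p q hp hq => intro x y; simp [hp x y, hq x y]
  | monomial n a ih =>
    have hcomm : T * Polynomial.aeval T (C a * X ^ n) = Polynomial.aeval T (C a * X ^ n) * T := by
      simpa only [aeval_X] using
        ((Commute.all (X : R[X]) (C a * X ^ n)).map (Polynomial.aeval T)).eq
    intro x y
    rw [pow_succ, ← mul_assoc, map_mul, aeval_X, Module.End.mul_apply, ih, hT,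
      ← Module.End.mul_apply, hcomm, Module.End.mul_apply]

theorem SeparatingLeft.eq_bot_of_isCoprime (hB : B.SeparatingLeft) (hT : B.IsSelfAdjoint T)
    {W : Submodule R M} (hW : ∀ w ∈ W, ∀ w' ∈ W, B w w' = 0) {p q : R[X]} (hpq : IsCoprime p q)
    (hp : ∀ w ∈ W, aeval T p w = 0) (hq : range (aeval T q) ≤ W) : W = ⊥ := by
  obtain ⟨a, b, hab⟩ := hpq
  refine (Submodule.eq_bot_iff W).2 fun w hw => hB w fun x => ?_
  have hx : x = aeval T p (aeval T a x) + aeval T q (aeval T b x) := by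
    rw [← Module.End.mul_apply, ← Module.End.mul_apply, ← map_mul, ← map_mul, ← add_apply,
      ← map_add, mul_comm p, mul_comm q, hab, map_one, Module.End.one_apply]
  rw [hx, map_add, ← hT.aeval, hp w hw, map_zero, zero_apply, zero_add]
  exact hW w hw _ (hq (mem_range_self _ _))

end Adjoint

lemma aeval_restrict_apply {R M : Type*} [CommRing R] [AddCommGroup M] [Module R M]
    (T : Module.End R M) {W : Submodule R M} (hW : ∀ x ∈ W, T x ∈ W) (p : R[X]) (x : W) :
    (aeval (T.restrict hW) p x : M) = aeval T p x := by
  induction p using Polynomial.induction_on generalizing x with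
  | C a => simp
  | add p q hp hq => simp [hp, hq]
  | monomial n a ih =>
    simp only [pow_succ, ← mul_assoc, map_mul (aeval _), aeval_X, Module.End.mul_apply] at ih ⊢
    exact ih _

variable {K M : Type*} [Field K] [AddCommGroup M] [Module K M] [FiniteDimensional K M]

theorem aeval_charpoly_restrict_apply (T : Module.End K M) {W : Submodule K M}
    (hW : ∀ x ∈ W, T x ∈ W) {w : M} (hw : w ∈ W) : aeval T (T.restrict hW).charpoly w = 0 := by
  simpa [aeval_self_charpoly] using
    (T.aeval_restrict_apply hW (T.restrict hW).charpoly ⟨w, hw⟩).symm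

theorem charpoly_eq_mul_of_isCompl (T : Module.End K M) {V W : Submodule K M} (hVW : IsCompl V W)
    (hV : ∀ x ∈ V, T x ∈ V) (hW : ∀ x ∈ W, T x ∈ W) :
    T.charpoly = (T.restrict hV).charpoly * (T.restrict hW).charpoly := by
  let e := Submodule.prodEquivOfIsCompl V W hVW
  have hprod : (T.restrict hV).prodMap (T.restrict hW) = e.symm.conj T := by
    apply ((Module.Free.chooseBasis K V).prod (Module.Free.chooseBasis K W)).ext
    simp only [Basis.prod_apply, coe_inl, coe_inr, prodMap_apply, LinearEquiv.conj_apply,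
      LinearEquiv.symm_symm, Submodule.coe_prodEquivOfIsCompl, coe_comp, LinearEquiv.coe_coe,
      Function.comp_apply, coprod_apply, Submodule.coe_subtype, map_add, Sum.forall, Sum.elim_inl,
      map_zero, ZeroMemClass.coe_zero, add_zero, LinearEquiv.eq_symm_apply, and_self,
      Submodule.coe_prodEquivOfIsCompl', coe_restrict_apply, implies_true, Sum.elim_inr, zero_add,
      e]
  rw [← e.symm.charpoly_conj T, ← hprod, charpoly_prodMap]

end LinearMap

namespace Module.End

variable {K M : Type*} [Field K] [AddCommGroup M] [Module K M] [FiniteDimensional K M]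

theorem exists_isCoprime_of_squarefree_charpoly {T : Module.End K M} (hT : Squarefree T.charpoly)
    {W : Submodule K M} (hW : W ∈ T.invtSubmodule) :
    ∃ p q : K[X], IsCoprime p q ∧ (∀ w ∈ W, aeval T p w = 0) ∧
      LinearMap.range (aeval T q) ≤ W := by
  obtain ⟨W', hW', hWW'⟩ :=
    isSemisimple_iff.1 (isSemisimple_of_squarefree_aeval_eq_zero hT T.aeval_self_charpoly) W hW
  have hmul := T.charpoly_eq_mul_of_isCompl hWW' hW hW'
  refine ⟨_, _, (IsRelPrime.of_squarefree_mul (hmul ▸ hT)).isCoprime, fun w hw => ?_, ?_⟩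
  · exact T.aeval_charpoly_restrict_apply hW hw
  · rintro _ ⟨x, rfl⟩
    obtain ⟨w, hw, w', hw', rfl⟩ :=
      Submodule.mem_sup.1 (hWW'.sup_eq_top ▸ Submodule.mem_top (x := x))
    rw [map_add, T.aeval_charpoly_restrict_apply hW' hw', add_zero]
    exact aeval_apply_smul_mem_of_le_comap hw _ T hW

end Module.End

theorem stmt2_general {k U : Type*} [Field k] [AddCommGroup U] [Module k U]
    [FiniteDimensional k U]
    (B : LinearMap.BilinForm k U)
    (hnd : LinearMap.BilinForm.Nondegenerate B)
    (T : Module.End k U) (hsa : ∀ v w : U, B (T v) w = B v (T w))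
    (hsep : (LinearMap.charpoly T).Separable)
    (W : Submodule k U) (hiso : ∀ w ∈ W, ∀ w' ∈ W, B w w' = 0)
    (hstable : ∀ w ∈ W, T w ∈ W) :
    W = ⊥ := by
  obtain ⟨p, q, hpq, hp, hq⟩ :=
    Module.End.exists_isCoprime_of_squarefree_charpoly hsep.squarefree hstable
  exact hnd.1.eq_bot_of_isCoprime hsa hiso hpq hp hq

/-- For a self-adjoint operator `T` with separable characteristic polynomial on a
nondegenerate quadratic space, no nonzero isotropic subspace is `T`-stable. -/
theorem stmt2 {k U : Type*} [Field k] [AddCommGroup U] [Module k U]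
    [FiniteDimensional k U] (hchar : (2 : k) ≠ 0)
    (B : LinearMap.BilinForm k U) (hsymm : LinearMap.BilinForm.IsSymm B)
    (hnd : LinearMap.BilinForm.Nondegenerate B)
    (T : Module.End k U) (hsa : ∀ v w : U, B (T v) w = B v (T w))
    (hsep : (LinearMap.charpoly T).Separable)
    (W : Submodule k U) (hiso : ∀ w ∈ W, ∀ w' ∈ W, B w w' = 0)
    (hstable : ∀ w ∈ W, T w ∈ W) :
    W = ⊥ :=
  stmt2_general B hnd T hsa hsep W hiso hstable
end

section
/- Let (U,Q) be a nondegenerate quadratic space of dimension N over a field k of characteristic not 2, and let T be a self-adjoint operator on U with separable characteristic polynomial f. Then the stabilizer of T in the orthogonal group O(U)(k) equals the 2-torsion of (k[T])^× , i.e., {g ∈ k[T] : g² = 1}; in particular it is isomorphic to the 2-torsion of the unit group of L = k[x]/(f). -/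
/-!
Over an algebraic closure the separable polynomial `charpoly T` has `dim U` distinct roots, each an
eigenvalue of `T` and hence a root of `minpoly T`; so `minpoly T = charpoly T`. Over the PID
`k[X]` some vector has annihilator equal to that of all of `U`, i.e. `(minpoly T)`, and by the
equality of degrees it is a cyclic vector. Hence everything commuting with `T` lies in `k[T]`, and
is therefore self-adjoint. For self-adjoint `g`, `B (g v) (g w) = B v (g² w)`, so by
nondegeneracy `g` is orthogonal exactly when `g² = 1`.
-/

open Polynomial Module

namespace LinearMap

variable {k U : Type*} [Field k] [AddCommGroup U] [Module k U] [FiniteDimensional k U]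

theorem charpoly_dvd_minpoly_of_separable (T : End k U) (hsep : T.charpoly.Separable) :
    T.charpoly ∣ minpoly k T := by
  let K := AlgebraicClosure k
  let T' := End.baseChangeHom k K U T
  have hmin : minpoly K T' ∣ (minpoly k T).map (algebraMap k K) :=
    minpoly.dvd K T' (by rw [aeval_map_algebraMap, aeval_algHom_apply, minpoly.aeval, map_zero])
  have hq0 : (minpoly k T).map (algebraMap k K) ≠ 0 :=
    map_ne_zero (minpoly.ne_zero (Algebra.IsIntegral.isIntegral T))
  rw [← map_dvd_map (algebraMap k K) (algebraMap k K).injective T.charpoly_monic,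
    IsAlgClosed.dvd_iff_roots_le_roots (map_ne_zero T.charpoly_monic.ne_zero) hq0,
    Multiset.le_iff_subset (nodup_roots hsep.map)]
  intro a ha
  have heig : T'.HasEigenvalue a := by
    rw [End.hasEigenvalue_iff_isRoot_charpoly]
    rw [← charpoly_baseChange] at ha
    exact isRoot_of_mem_roots ha
  exact (mem_roots hq0).mpr ((End.isRoot_of_hasEigenvalue heig).dvd hmin)

theorem minpoly_eq_charpoly_of_separable (T : End k U) (hsep : T.charpoly.Separable) :
    minpoly k T = T.charpoly :=
  eq_of_monic_of_associated (minpoly.monic (Algebra.IsIntegral.isIntegral T)) T.charpoly_monic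
    (associated_of_dvd_dvd T.minpoly_dvd_charpoly (charpoly_dvd_minpoly_of_separable T hsep))

end LinearMap

namespace Module.End

section CommRing

variable {R M : Type*} [CommRing R] [AddCommGroup M] [Module R M]

def IsCyclicVector (T : End R M) (v : M) : Prop :=
  ∀ w : M, ∃ p : R[X], aeval T p v = w

theorem IsCyclicVector.mem_adjoin_singleton_of_commute {T g : End R M} {v : M}
    (hv : T.IsCyclicVector v) (hg : Commute g T) : g ∈ Algebra.adjoin R {T} := by
  obtain ⟨p, hp⟩ := hv (g v)
  suffices g = aeval T p from this ▸ Algebra.adjoin_singleton_eq_range_aeval R T ▸ ⟨p, rfl⟩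
  ext w
  obtain ⟨q, rfl⟩ := hv w
  calc g (aeval T q v) = aeval T q (g v) := by
        rw [← mul_apply, (Algebra.commute_of_mem_adjoin_singleton_of_commute
          (aeval_mem_adjoin_singleton R T) hg).eq, mul_apply]
    _ = aeval T p (aeval T q v) := by
        rw [← hp, ← mul_apply, ← mul_apply, ← map_mul, ← map_mul, mul_comm]

end CommRing

variable {k U : Type*} [Field k] [AddCommGroup U] [Module k U] [FiniteDimensional k U]

theorem exists_minpoly_dvd_of_aeval_apply_eq_zero (T : End k U) :
    ∃ v : U, ∀ p : k[X], aeval T p v = 0 → minpoly k T ∣ p := by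
  obtain ⟨x, hx⟩ := exists_ker_toSpanSingleton_eq_annihilator (R := k[X]) (M := AEval' T)
  refine ⟨(AEval'.of T).symm x, fun p hp ↦ ?_⟩
  rw [← Ideal.mem_span_singleton, span_minpoly_eq_annihilator, ← hx, LinearMap.mem_ker,
    LinearMap.toSpanSingleton_apply, ← (AEval'.of T).apply_symm_apply x, ← AEval.of_aeval_smul]
  exact (AEval'.of T).map_eq_zero_iff.mpr hp

theorem exists_isCyclicVector_of_natDegree_minpoly (T : End k U)
    (h : (minpoly k T).natDegree = finrank k U) : ∃ v : U, T.IsCyclicVector v := by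
  obtain ⟨v, hv⟩ := exists_minpoly_dvd_of_aeval_apply_eq_zero T
  let φ : degreeLT k (finrank k U) →ₗ[k] U :=
    LinearMap.applyₗ v ∘ₗ (aeval T).toLinearMap ∘ₗ (degreeLT k (finrank k U)).subtype
  have hinj : Function.Injective φ := by
    rw [← LinearMap.ker_eq_bot, Submodule.eq_bot_iff]
    rintro ⟨p, hp⟩ hφ
    have hdeg : p.degree < (minpoly k T).degree := by
      rwa [degree_eq_natDegree (minpoly.ne_zero (Algebra.IsIntegral.isIntegral T)), h,
        ← mem_degreeLT]
    exact Subtype.ext (eq_zero_of_dvd_of_degree_lt (hv p hφ) hdeg)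
  have hfin : finrank k (degreeLT k (finrank k U)) = finrank k U := by
    rw [(degreeLTEquiv k _).finrank_eq, finrank_fin_fun]
  have hsurj := (LinearMap.injective_iff_surjective_of_finrank_eq_finrank hfin).mp hinj
  refine ⟨v, fun w ↦ ?_⟩
  obtain ⟨⟨p, _⟩, hp⟩ := hsurj w
  exact ⟨p, hp⟩

end Module.End

namespace LinearMap

variable {R M : Type*} [CommRing R] [AddCommGroup M] [Module R M] {B : LinearMap.BilinForm R M}

theorem isSelfAdjoint_of_mem_adjoin_singleton {T g : End R M} (hT : B.IsSelfAdjoint T)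
    (hg : g ∈ Algebra.adjoin R {T}) : B.IsSelfAdjoint g := by
  induction hg using Algebra.adjoin_induction with
  | mem x hx => exact (Set.mem_singleton_iff.mp hx) ▸ hT
  | algebraMap r =>
    exact (Algebra.algebraMap_eq_smul_one (A := End R M) r) ▸ isAdjointPair_one.smul r
  | add x y _ _ hx hy => exact hx.add hy
  | mul x y hxT hyT hx hy =>
    have hxy : Commute x y := Algebra.commute_of_mem_adjoin_of_forall_mem_commute hyT
      fun z hz ↦ (Set.mem_singleton_iff.mp hz) ▸ (Algebra.commute_of_mem_adjoin_self hxT).symm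
    exact hxy.eq ▸ hx.mul hy

theorem isOrthogonal_iff_mul_self_eq_one_of_isSelfAdjoint (hB : B.SeparatingLeft) {g : End R M}
    (hg : B.IsSelfAdjoint g) : B.IsOrthogonal g ↔ g * g = 1 := by
  refine ⟨fun ho ↦ ?_, fun hgg x y ↦ ?_⟩
  · ext x
    refine sub_eq_zero.mp (hB _ fun y ↦ ?_)
    rw [map_sub, sub_apply, End.mul_apply, hg, ho, End.one_apply, sub_self]
  · rw [hg, ← End.mul_apply, hgg, End.one_apply]

end LinearMap

theorem stmt6_general {k U : Type*} [Field k] [AddCommGroup U] [Module k U]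
    [FiniteDimensional k U]
    (B : LinearMap.BilinForm k U)
    (hnd : LinearMap.BilinForm.Nondegenerate B)
    (T : Module.End k U) (hsa : ∀ v w : U, B (T v) w = B v (T w))
    (hsep : (LinearMap.charpoly T).Separable) :
    {g : Module.End k U | (∀ v w : U, B (g v) (g w) = B v w) ∧ g * T = T * g} =
      {g : Module.End k U | g ∈ Algebra.adjoin k {T} ∧ g * g = 1} := by
  have hdeg : (minpoly k T).natDegree = finrank k U := by
    rw [LinearMap.minpoly_eq_charpoly_of_separable T hsep, LinearMap.charpoly_natDegree]
  obtain ⟨v, hv⟩ := Module.End.exists_isCyclicVector_of_natDegree_minpoly T hdeg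
  have horth_iff {g : Module.End k U} (hg : g ∈ Algebra.adjoin k {T}) :
      B.IsOrthogonal g ↔ g * g = 1 :=
    LinearMap.isOrthogonal_iff_mul_self_eq_one_of_isSelfAdjoint hnd.1
      (LinearMap.isSelfAdjoint_of_mem_adjoin_singleton hsa hg)
  ext g
  constructor
  · rintro ⟨horth, hcomm⟩
    have hg := hv.mem_adjoin_singleton_of_commute hcomm
    exact ⟨hg, (horth_iff hg).mp horth⟩
  · rintro ⟨hg, hgg⟩
    exact ⟨(horth_iff hg).mpr hgg, (Algebra.commute_of_mem_adjoin_self hg).eq.symm⟩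

/-- The stabilizer of a self-adjoint operator `T` with separable characteristic
polynomial in the orthogonal group `O(U)(k)` equals the 2-torsion of `k[T]`:
the set of isometries commuting with `T` is exactly
`{g ∈ k[T] : g² = 1}` (isomorphic to the 2-torsion of `(k[x]/(f))^×`). -/
theorem stmt6 {k U : Type*} [Field k] [AddCommGroup U] [Module k U]
    [FiniteDimensional k U] (hchar : (2 : k) ≠ 0)
    (B : LinearMap.BilinForm k U) (hsymm : LinearMap.BilinForm.IsSymm B)
    (hnd : LinearMap.BilinForm.Nondegenerate B)
    (T : Module.End k U) (hsa : ∀ v w : U, B (T v) w = B v (T w))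
    (hsep : (LinearMap.charpoly T).Separable) :
    {g : Module.End k U | (∀ v w : U, B (g v) (g w) = B v w) ∧ g * T = T * g} =
      {g : Module.End k U | g ∈ Algebra.adjoin k {T} ∧ g * g = 1} :=
  stmt6_general B hnd T hsa hsep
end
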